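/- arXiv:1308.5000 — 4 statements merged into one kernel-verified Lean document; each statement's English description precedes it below -/
import Mathlib

section
/- Let A ∈ ℝ^{m×n} satisfy the D-RIP adapted to D ∈ ℝ^{n×p} with constant σ_{2s} for some s ≥ 1, and let u, v ∈ Σ_s. Then Re⟨Au, Av⟩ ≥ −σ_{2s}·‖u‖₂·‖v‖₂ + Re⟨u, v⟩. -/
open scoped BigOperators

/-- Euclidean (ℓ₂) norm of a vector in ℝᵏ. -/
noncomputable def l2norm {k : ℕ} (v : Fin k → ℝ) : ℝ := Real.sqrt (∑ i, (v i) ^ 2)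

/-- Number of nonzero entries of a vector ("ℓ₀ norm"). -/
noncomputable def l0norm {k : ℕ} (v : Fin k → ℝ) : ℕ :=
  (Finset.univ.filter (fun i => v i ≠ 0)).card

/-- Standard inner product on ℝᵏ (equals `Re⟨·,·⟩` for real vectors). -/
noncomputable def dotp {k : ℕ} (a b : Fin k → ℝ) : ℝ := ∑ i, a i * b i

/-- `A` satisfies the restricted isometry property adapted to `D` (D-RIP) with
sparsity level `s` and constant `σ`:
`(1−σ)‖v‖₂² ≤ ‖Av‖₂² ≤ (1+σ)‖v‖₂²` for all `v ∈ Σ_s = {Dw : ‖w‖₀ ≤ s}`. -/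
def DRIP {m n p : ℕ} (A : Matrix (Fin m) (Fin n) ℝ) (D : Matrix (Fin n) (Fin p) ℝ)
    (s : ℕ) (σ : ℝ) : Prop :=
  ∀ w : Fin p → ℝ, l0norm w ≤ s →
    (1 - σ) * (l2norm (D.mulVec w)) ^ 2 ≤ (l2norm (A.mulVec (D.mulVec w))) ^ 2 ∧
    (l2norm (A.mulVec (D.mulVec w))) ^ 2 ≤ (1 + σ) * (l2norm (D.mulVec w)) ^ 2

lemma sq_l2 {k : ℕ} (x : Fin k → ℝ) : (l2norm x) ^ 2 = ∑ i, (x i) ^ 2 := by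
  unfold l2norm
  exact Real.sq_sqrt (Finset.sum_nonneg fun i _ => sq_nonneg _)

lemma l2_nonneg {k : ℕ} (x : Fin k → ℝ) : 0 ≤ l2norm x := Real.sqrt_nonneg _

lemma l2_eq_zero {k : ℕ} (x : Fin k → ℝ) (h : l2norm x = 0) : x = 0 := by
  have h2 : ∑ i, (x i) ^ 2 = 0 := by
    have := sq_l2 x; rw [h] at this; simpa using this.symm
  funext i
  have := (Finset.sum_eq_zero_iff_of_nonneg (fun i _ => sq_nonneg (x i))).mp h2 i (Finset.mem_univ i)
  exact pow_eq_zero_iff (n := 2) (by norm_num) |>.mp this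

lemma l0_add_le {k : ℕ} (a b : Fin k → ℝ) : l0norm (a + b) ≤ l0norm a + l0norm b := by
  unfold l0norm
  calc (Finset.univ.filter (fun i => (a + b) i ≠ 0)).card
      ≤ ((Finset.univ.filter (fun i => a i ≠ 0)) ∪ (Finset.univ.filter (fun i => b i ≠ 0))).card := by
        apply Finset.card_le_card
        intro i hi
        simp only [Finset.mem_filter, Finset.mem_univ, true_and, Pi.add_apply] at hi
        simp only [Finset.mem_union, Finset.mem_filter, Finset.mem_univ, true_and]
        by_contra hc
        push_neg at hc
        exact hi (by rw [hc.1, hc.2, add_zero])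
    _ ≤ _ := Finset.card_union_le _ _

lemma l0_sub_le {k : ℕ} (a b : Fin k → ℝ) : l0norm (a - b) ≤ l0norm a + l0norm b := by
  have h : a - b = a + (-b) := by ring
  rw [h]
  refine le_trans (l0_add_le a (-b)) ?_
  have : l0norm (-b) = l0norm b := by
    unfold l0norm; congr 1; apply Finset.filter_congr; intro i _; simp
  omega

lemma l0_smul_le {k : ℕ} (c : ℝ) (a : Fin k → ℝ) : l0norm (c • a) ≤ l0norm a := by
  unfold l0norm
  apply Finset.card_le_card
  intro i hi
  simp only [Finset.mem_filter, Finset.mem_univ, true_and, Pi.smul_apply, smul_eq_mul] at hi ⊢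
  intro h; exact hi (by rw [h, mul_zero])

lemma dotp_smul_smul {k : ℕ} (c d : ℝ) (x y : Fin k → ℝ) :
    dotp (c • x) (d • y) = c * d * dotp x y := by
  unfold dotp
  rw [Finset.mul_sum]
  apply Finset.sum_congr rfl
  intro i _
  simp only [Pi.smul_apply, smul_eq_mul]
  ring

lemma l2_smul_sq {k : ℕ} (c : ℝ) (x : Fin k → ℝ) :
    (l2norm (c • x)) ^ 2 = c ^ 2 * (l2norm x) ^ 2 := by
  rw [sq_l2, sq_l2, Finset.mul_sum]
  apply Finset.sum_congr rfl
  intro i _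
  simp only [Pi.smul_apply, smul_eq_mul]
  ring

lemma core {m n p : ℕ} (A : Matrix (Fin m) (Fin n) ℝ) (D : Matrix (Fin n) (Fin p) ℝ)
    (s : ℕ) (σ : ℝ) (hA : DRIP A D (2 * s) σ)
    (wu wv : Fin p → ℝ) (hwu : l0norm wu ≤ s) (hwv : l0norm wv ≤ s) :
    dotp (A.mulVec (D.mulVec wu)) (A.mulVec (D.mulVec wv)) ≥
      dotp (D.mulVec wu) (D.mulVec wv)
      - σ * ((l2norm (D.mulVec wu))^2 + (l2norm (D.mulVec wv))^2) / 2 := by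
  have h1 := (hA (wu + wv) (le_trans (l0_add_le _ _) (by omega))).1
  have h2 := (hA (wu - wv) (le_trans (l0_sub_le _ _) (by omega))).2
  rw [Matrix.mulVec_add, Matrix.mulVec_add] at h1
  rw [Matrix.mulVec_sub, Matrix.mulVec_sub] at h2
  set u := D.mulVec wu with hud
  set v := D.mulVec wv with hvd
  have polA : (l2norm (A.mulVec u + A.mulVec v))^2 - (l2norm (A.mulVec u - A.mulVec v))^2
      = 4 * dotp (A.mulVec u) (A.mulVec v) := by
    rw [sq_l2, sq_l2]
    unfold dotp
    rw [← Finset.sum_sub_distrib, Finset.mul_sum]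
    apply Finset.sum_congr rfl
    intro i _
    simp only [Pi.add_apply, Pi.sub_apply]
    ring
  have pol : (l2norm (u + v))^2 - (l2norm (u - v))^2 = 4 * dotp u v := by
    rw [sq_l2, sq_l2]
    unfold dotp
    rw [← Finset.sum_sub_distrib, Finset.mul_sum]
    apply Finset.sum_congr rfl
    intro i _
    simp only [Pi.add_apply, Pi.sub_apply]
    ring
  have par : (l2norm (u + v))^2 + (l2norm (u - v))^2 = 2 * ((l2norm u)^2 + (l2norm v)^2) := by
    rw [sq_l2, sq_l2, sq_l2, sq_l2, ← Finset.sum_add_distrib]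
    have h : ∑ x, ((u + v) x ^ 2 + (u - v) x ^ 2) = ∑ x, (2 * u x ^ 2 + 2 * v x ^ 2) := by
      apply Finset.sum_congr rfl
      intro i _
      simp only [Pi.add_apply, Pi.sub_apply]
      ring
    rw [h, Finset.sum_add_distrib, ← Finset.mul_sum, ← Finset.mul_sum]
    ring
  have par' : σ * ((l2norm (u + v))^2 + (l2norm (u - v))^2)
      = σ * (2 * ((l2norm u)^2 + (l2norm v)^2)) := by rw [par]
  linarith [h1, h2, polA, pol, par']

/-- if `A` satisfies the D-RIP with constant `σ_{2s}` and `u, v ∈ Σ_s`,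
then `Re⟨Au, Av⟩ ≥ −σ_{2s}·‖u‖₂·‖v‖₂ + Re⟨u, v⟩`. -/
theorem drip_inner_product_bound
    {m n p : ℕ} (A : Matrix (Fin m) (Fin n) ℝ) (D : Matrix (Fin n) (Fin p) ℝ)
    (s : ℕ) (hs : 1 ≤ s) (σ : ℝ) (hA : DRIP A D (2 * s) σ)
    (u v : Fin n → ℝ)
    (hu : ∃ wu : Fin p → ℝ, l0norm wu ≤ s ∧ u = D.mulVec wu)
    (hv : ∃ wv : Fin p → ℝ, l0norm wv ≤ s ∧ v = D.mulVec wv) :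
    dotp (A.mulVec u) (A.mulVec v) ≥ -σ * l2norm u * l2norm v + dotp u v := by
  obtain ⟨wu, hwu, rfl⟩ := hu
  obtain ⟨wv, hwv, rfl⟩ := hv
  by_cases hu0 : l2norm (D.mulVec wu) = 0
  · have h0 : D.mulVec wu = 0 := l2_eq_zero _ hu0
    rw [hu0, h0]
    simp [dotp, Matrix.mulVec_zero]
  by_cases hv0 : l2norm (D.mulVec wv) = 0
  · have h0 : D.mulVec wv = 0 := l2_eq_zero _ hv0
    rw [hv0, h0]
    simp [dotp, Matrix.mulVec_zero]
  have hc : 0 < l2norm (D.mulVec wv) := lt_of_le_of_ne (l2_nonneg _) (Ne.symm hv0)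
  have hd : 0 < l2norm (D.mulVec wu) := lt_of_le_of_ne (l2_nonneg _) (Ne.symm hu0)
  have key := core A D s σ hA (l2norm (D.mulVec wv) • wu) (l2norm (D.mulVec wu) • wv)
    (le_trans (l0_smul_le _ wu) hwu) (le_trans (l0_smul_le _ wv) hwv)
  simp only [Matrix.mulVec_smul] at key
  rw [dotp_smul_smul, dotp_smul_smul, l2_smul_sq, l2_smul_sq] at key
  nlinarith [key, mul_pos hc hd, sq_nonneg (l2norm (D.mulVec wu) - l2norm (D.mulVec wv))]
end

section
/- Let D ∈ ℝ^{n×p} be a tight frame (DDᵀ = Iₙ) and let A ∈ ℝ^{m×n} satisfy the D-RIP adapted to D with constant σ_{2s}. Let h ∈ ℝⁿ, let T₀ = T ⊆ {1,…,p} be a set of size s, let T₁ be the set of the s indices of T^c on which |Dᵀh| is largest, T₂ the next s largest, and so on, and let T₀₁ = T₀ ∪ T₁. Then Re⟨Ah, ADDᵀ_{T₀₁}h⟩ ≥ (1−σ_{2s})·‖Dᵀ_{T₀₁}h‖₂² − √2·s^{−1/2}·σ_{2s}·‖Dᵀ_{T₀₁}h‖₂·‖Dᵀ_{T^c}h‖₁.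 -/
open scoped BigOperators

/-- ℓ₁ norm of a vector in ℝᵏ. -/
noncomputable def l1norm {k : ℕ} (v : Fin k → ℝ) : ℝ := ∑ i, |v i|

/-- The vector equal to `v` on coordinates in `S` and zero elsewhere. -/
def restr {k : ℕ} (S : Finset (Fin k)) (v : Fin k → ℝ) : Fin k → ℝ :=
  fun i => if i ∈ S then v i else 0

noncomputable def sq2 {k : ℕ} (v : Fin k → ℝ) : ℝ := ∑ i, v i ^ 2

lemma sq2_nonneg {k : ℕ} (v : Fin k → ℝ) : 0 ≤ sq2 v :=
  Finset.sum_nonneg fun i _ => sq_nonneg _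

lemma l2norm_nonneg {k : ℕ} (v : Fin k → ℝ) : 0 ≤ l2norm v := Real.sqrt_nonneg _

lemma l2norm_sq {k : ℕ} (v : Fin k → ℝ) : l2norm v ^ 2 = sq2 v :=
  Real.sq_sqrt (sq2_nonneg v)

lemma l2norm_eq {k : ℕ} (v : Fin k → ℝ) : l2norm v = Real.sqrt (sq2 v) := rfl

lemma dotp_self {k : ℕ} (v : Fin k → ℝ) : dotp v v = sq2 v := by
  unfold dotp sq2; exact Finset.sum_congr rfl fun i _ => by ring

lemma dotp_add_left {k : ℕ} (a b c : Fin k → ℝ) : dotp (a + b) c = dotp a c + dotp b c := by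
  unfold dotp; rw [← Finset.sum_add_distrib]
  exact Finset.sum_congr rfl fun i _ => by simp [add_mul]

lemma dotp_add_right {k : ℕ} (a b c : Fin k → ℝ) : dotp a (b + c) = dotp a b + dotp a c := by
  unfold dotp; rw [← Finset.sum_add_distrib]
  exact Finset.sum_congr rfl fun i _ => by simp [mul_add]

lemma dotp_sub_left {k : ℕ} (a b c : Fin k → ℝ) : dotp (a - b) c = dotp a c - dotp b c := by
  unfold dotp; rw [← Finset.sum_sub_distrib]
  exact Finset.sum_congr rfl fun i _ => by simp [sub_mul]

lemma dotp_smul_left {k : ℕ} (t : ℝ) (a b : Fin k → ℝ) : dotp (t • a) b = t * dotp a b := by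
  unfold dotp; rw [Finset.mul_sum]
  exact Finset.sum_congr rfl fun i _ => by simp [mul_assoc]

lemma dotp_smul_right {k : ℕ} (t : ℝ) (a b : Fin k → ℝ) : dotp a (t • b) = t * dotp a b := by
  unfold dotp; rw [Finset.mul_sum]
  exact Finset.sum_congr rfl fun i _ => by simp; ring

lemma dotp_zero_left {k : ℕ} (b : Fin k → ℝ) : dotp 0 b = 0 := by simp [dotp]
lemma dotp_zero_right {k : ℕ} (a : Fin k → ℝ) : dotp a 0 = 0 := by simp [dotp]

lemma sq2_smul {k : ℕ} (t : ℝ) (v : Fin k → ℝ) : sq2 (t • v) = t ^ 2 * sq2 v := by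
  unfold sq2; rw [Finset.mul_sum]
  exact Finset.sum_congr rfl fun i _ => by simp [mul_pow]

lemma sq2_add_sub {k : ℕ} (a b : Fin k → ℝ) :
    sq2 (a + b) - sq2 (a - b) = 4 * dotp a b := by
  unfold sq2 dotp
  rw [← Finset.sum_sub_distrib, Finset.mul_sum]
  exact Finset.sum_congr rfl fun i _ => by simp only [Pi.add_apply, Pi.sub_apply]; ring

lemma sq2_parallelogram {k : ℕ} (a b : Fin k → ℝ) :
    sq2 (a + b) + sq2 (a - b) = 2 * sq2 a + 2 * sq2 b := by
  unfold sq2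
  rw [← Finset.sum_add_distrib, Finset.mul_sum, Finset.mul_sum, ← Finset.sum_add_distrib]
  exact Finset.sum_congr rfl fun i _ => by simp only [Pi.add_apply, Pi.sub_apply]; ring

lemma sq2_eq_zero {k : ℕ} {v : Fin k → ℝ} (h : sq2 v = 0) : v = 0 := by
  funext i
  have := (Finset.sum_eq_zero_iff_of_nonneg (fun i _ => sq_nonneg (v i))).mp h i (Finset.mem_univ i)
  exact pow_eq_zero_iff (two_ne_zero) |>.mp this

lemma dotp_mulVec_right {a b : ℕ} (M : Matrix (Fin a) (Fin b) ℝ) (u : Fin a → ℝ)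
    (v : Fin b → ℝ) : dotp u (M.mulVec v) = dotp (M.transpose.mulVec u) v := by
  unfold dotp
  simp only [Matrix.mulVec, dotProduct, Matrix.transpose_apply, Finset.mul_sum,
    Finset.sum_mul]
  rw [Finset.sum_comm]
  exact Finset.sum_congr rfl fun i _ => Finset.sum_congr rfl fun j _ => by ring

lemma restr_union_disj {k : ℕ} {S T : Finset (Fin k)} (hd : Disjoint S T) (v : Fin k → ℝ) :
    restr (S ∪ T) v = restr S v + restr T v := by
  funext i
  by_cases hS : i ∈ S <;> by_cases hT : i ∈ T <;>
    simp_all [restr, Finset.mem_union, Finset.disjoint_left.mp hd]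

lemma restr_add_compl {k : ℕ} (S : Finset (Fin k)) (v : Fin k → ℝ) :
    restr S v + restr Sᶜ v = v := by
  funext i
  by_cases hS : i ∈ S <;> simp [restr, hS]

lemma l0norm_restr_le {k : ℕ} (S : Finset (Fin k)) (v : Fin k → ℝ) :
    l0norm (restr S v) ≤ S.card := by
  unfold l0norm
  apply Finset.card_le_card
  intro i hi
  rw [Finset.mem_filter] at hi
  by_contra hc
  exact hi.2 (if_neg hc)

lemma l0norm_add_le {k : ℕ} (u v : Fin k → ℝ) : l0norm (u + v) ≤ l0norm u + l0norm v := by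
  unfold l0norm
  refine le_trans (Finset.card_le_card ?_) (Finset.card_union_le _ _)
  intro i hi
  simp only [Finset.mem_filter, Finset.mem_union, Finset.mem_univ, true_and,
    Pi.add_apply] at hi ⊢
  by_contra hc
  push_neg at hc
  simp [hc.1, hc.2] at hi

lemma l0norm_smul_le {k : ℕ} (t : ℝ) (v : Fin k → ℝ) : l0norm (t • v) ≤ l0norm v := by
  apply Finset.card_le_card
  intro i hi
  simp only [Finset.mem_filter, Finset.mem_univ, true_and, Pi.smul_apply, smul_eq_mul] at hi ⊢
  intro hc
  simp [hc] at hi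

lemma l0norm_neg {k : ℕ} (v : Fin k → ℝ) : l0norm (-v) ≤ l0norm v := by
  apply Finset.card_le_card
  intro i hi
  simp only [Finset.mem_filter, Finset.mem_univ, true_and, Pi.neg_apply, neg_ne_zero] at hi ⊢
  exact hi

lemma l0norm_sub_le {k : ℕ} (u v : Fin k → ℝ) : l0norm (u - v) ≤ l0norm u + l0norm v := by
  rw [sub_eq_add_neg]
  exact le_trans (l0norm_add_le u (-v)) (by have := l0norm_neg v; omega)

lemma sq2_restr {k : ℕ} (S : Finset (Fin k)) (v : Fin k → ℝ) :
    sq2 (restr S v) = ∑ i ∈ S, v i ^ 2 := by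
  simp [sq2, restr, apply_ite (· ^ 2), Finset.sum_ite_mem]

lemma l1norm_restr {k : ℕ} (S : Finset (Fin k)) (v : Fin k → ℝ) :
    (∑ i, |restr S v i|) = ∑ i ∈ S, |v i| := by
  simp [restr, apply_ite abs, Finset.sum_ite_mem]

lemma dotp_restr_self {k : ℕ} (S : Finset (Fin k)) (v : Fin k → ℝ) :
    (∑ i, v i * restr S v i) = sq2 (restr S v) := by
  unfold sq2 restr
  exact Finset.sum_congr rfl fun i _ => by by_cases h : i ∈ S <;> simp [h] <;> ring

lemma exists_top {p : ℕ} (f : Fin p → ℝ) :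
    ∀ (k : ℕ) (R : Finset (Fin p)), k ≤ R.card →
      ∃ B, B ⊆ R ∧ B.card = k ∧ ∀ i ∈ B, ∀ j ∈ R \ B, f j ≤ f i := by
  intro k
  induction k with
  | zero => exact fun R _ => ⟨∅, Finset.empty_subset R, Finset.card_empty, by simp⟩
  | succ k IH =>
    intro R hk
    obtain ⟨B, hBR, hBc, hBt⟩ := IH R (Nat.le_of_succ_le hk)
    have hne : (R \ B).Nonempty := by
      rw [← Finset.card_pos, Finset.card_sdiff_of_subset hBR]
      omega
    obtain ⟨j0, hj0, hj0max⟩ := Finset.exists_max_image (R \ B) f hne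
    have hj0R : j0 ∈ R := (Finset.mem_sdiff.mp hj0).1
    have hj0B : j0 ∉ B := (Finset.mem_sdiff.mp hj0).2
    refine ⟨insert j0 B, Finset.insert_subset hj0R hBR, ?_, ?_⟩
    · rw [Finset.card_insert_of_notMem hj0B, hBc]
    · intro i hi j hj
      have hj' : j ∈ R \ B :=
        Finset.sdiff_subset_sdiff (le_refl R) (Finset.subset_insert j0 B) hj
      rcases Finset.mem_insert.mp hi with h | h
      · exact h ▸ hj0max j hj'
      · exact hBt i h j hj'
lemma contract {n p : ℕ} (D : Matrix (Fin n) (Fin p) ℝ) (htf : D * D.transpose = 1)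
    (w : Fin p → ℝ) : sq2 (D.mulVec w) ≤ sq2 w := by
  set Q : Matrix (Fin p) (Fin p) ℝ := D.transpose * D with hQ
  have hQw : ∀ v : Fin p → ℝ, Q.mulVec v = D.transpose.mulVec (D.mulVec v) := by
    intro v; rw [hQ, ← Matrix.mulVec_mulVec]
  have hQsymm : Q.transpose = Q := by
    rw [hQ, Matrix.transpose_mul, Matrix.transpose_transpose]
  have hQidem : Q * Q = Q := by
    rw [hQ, Matrix.mul_assoc, ← Matrix.mul_assoc D, htf, Matrix.one_mul]
  have key : sq2 (D.mulVec w) = dotp (Q.mulVec w) w := by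
    rw [← dotp_self, dotp_mulVec_right, ← hQw]
  have key2 : sq2 (Q.mulVec w) = dotp (Q.mulVec w) w := by
    rw [← dotp_self]
    conv_lhs => rw [show Q.mulVec w = Q.mulVec w from rfl]
    rw [dotp_mulVec_right, hQsymm, Matrix.mulVec_mulVec, hQidem]
  have hCS : (dotp (Q.mulVec w) w) ^ 2 ≤ sq2 (Q.mulVec w) * sq2 w := by
    unfold dotp sq2
    exact Finset.sum_mul_sq_le_sq_mul_sq Finset.univ _ _
  have h0 : 0 ≤ sq2 (D.mulVec w) := sq2_nonneg _
  nlinarith [sq2_nonneg w]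

lemma cross_half {m n p s : ℕ} {A : Matrix (Fin m) (Fin n) ℝ} {D : Matrix (Fin n) (Fin p) ℝ}
    {σ : ℝ} (hA : DRIP A D (2 * s) σ) (w1 w2 : Fin p → ℝ)
    (hw : l0norm (w1 + w2) ≤ 2 * s) (hw' : l0norm (w1 - w2) ≤ 2 * s) :
    |dotp (A.mulVec (D.mulVec w1)) (A.mulVec (D.mulVec w2))
       - dotp (D.mulVec w1) (D.mulVec w2)|
      ≤ σ / 2 * (sq2 (D.mulVec w1) + sq2 (D.mulVec w2)) := by
  obtain ⟨lo1, up1⟩ := hA _ hw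
  obtain ⟨lo2, up2⟩ := hA _ hw'
  rw [l2norm_sq, l2norm_sq] at lo1 up1 lo2 up2
  rw [Matrix.mulVec_add, Matrix.mulVec_add] at lo1 up1
  rw [Matrix.mulVec_sub, Matrix.mulVec_sub] at lo2 up2
  set u := D.mulVec w1
  set v := D.mulVec w2
  have e1 : sq2 (A.mulVec u + A.mulVec v) - sq2 (A.mulVec u - A.mulVec v)
      = 4 * dotp (A.mulVec u) (A.mulVec v) := sq2_add_sub _ _
  have e2 : sq2 (u + v) - sq2 (u - v) = 4 * dotp u v := sq2_add_sub _ _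
  have e3 : sq2 (u + v) + sq2 (u - v) = 2 * sq2 u + 2 * sq2 v := sq2_parallelogram _ _
  have hσe3 : σ * (sq2 (u + v) + sq2 (u - v)) = σ * (2 * sq2 u + 2 * sq2 v) := by rw [e3]
  rw [abs_le]
  constructor <;> nlinarith [hσe3]

lemma cross_prod {m n p s : ℕ} {A : Matrix (Fin m) (Fin n) ℝ} {D : Matrix (Fin n) (Fin p) ℝ}
    {σ : ℝ} (hA : DRIP A D (2 * s) σ) (w1 w2 : Fin p → ℝ)
    (hw : l0norm w1 + l0norm w2 ≤ 2 * s) :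
    |dotp (A.mulVec (D.mulVec w1)) (A.mulVec (D.mulVec w2))
       - dotp (D.mulVec w1) (D.mulVec w2)|
      ≤ σ * l2norm (D.mulVec w1) * l2norm (D.mulVec w2) := by
  set a := l2norm (D.mulVec w1) with ha
  set b := l2norm (D.mulVec w2) with hb
  have ha0 : 0 ≤ a := l2norm_nonneg _
  have hb0 : 0 ≤ b := l2norm_nonneg _
  by_cases haz : a = 0
  · have : D.mulVec w1 = 0 := by
      apply sq2_eq_zero
      rw [← l2norm_sq, ← ha, haz]; norm_num
    rw [this, Matrix.mulVec_zero, dotp_zero_left, dotp_zero_left, haz]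
    simp
  by_cases hbz : b = 0
  · have : D.mulVec w2 = 0 := by
      apply sq2_eq_zero
      rw [← l2norm_sq, ← hb, hbz]; norm_num
    rw [this, Matrix.mulVec_zero, dotp_zero_right, dotp_zero_right, hbz]
    simp
  have hap : 0 < a := lt_of_le_of_ne ha0 (Ne.symm haz)
  have hbp : 0 < b := lt_of_le_of_ne hb0 (Ne.symm hbz)
  set t := Real.sqrt (b / a) with ht
  have htp : 0 < t := Real.sqrt_pos.mpr (div_pos hbp hap)
  have ht2 : t ^ 2 = b / a := Real.sq_sqrt (le_of_lt (div_pos hbp hap))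
  have hsum : l0norm (t • w1 + t⁻¹ • w2) ≤ 2 * s :=
    le_trans (l0norm_add_le _ _)
      (le_trans (Nat.add_le_add (l0norm_smul_le _ _) (l0norm_smul_le _ _)) hw)
  have hsub : l0norm (t • w1 - t⁻¹ • w2) ≤ 2 * s :=
    le_trans (l0norm_sub_le _ _)
      (le_trans (Nat.add_le_add (l0norm_smul_le _ _) (l0norm_smul_le _ _)) hw)
  have key := cross_half hA (t • w1) (t⁻¹ • w2) hsum hsub
  rw [Matrix.mulVec_smul, Matrix.mulVec_smul, Matrix.mulVec_smul, Matrix.mulVec_smul,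
    dotp_smul_left, dotp_smul_right, dotp_smul_left, dotp_smul_right,
    sq2_smul, sq2_smul, ← mul_assoc, ← mul_assoc, mul_inv_cancel₀ (ne_of_gt htp),
    one_mul, one_mul] at key
  have hsq1 : sq2 (D.mulVec w1) = a ^ 2 := (l2norm_sq _).symm
  have hsq2 : sq2 (D.mulVec w2) = b ^ 2 := (l2norm_sq _).symm
  rw [hsq1, hsq2] at key
  have harith : σ / 2 * (t ^ 2 * a ^ 2 + (t⁻¹) ^ 2 * b ^ 2) = σ * a * b := by
    rw [ht2, inv_pow, ht2]
    field_simp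
    ring
  rw [harith] at key
  exact key

lemma sqrts_facts {s : ℕ} (hs : 1 ≤ s) :
    Real.sqrt s * Real.sqrt s = s ∧ 0 < Real.sqrt s ∧
      (Real.sqrt s)⁻¹ * s = Real.sqrt s := by
  have h0 : (0:ℝ) < s := by exact_mod_cast hs
  have h1 : Real.sqrt s * Real.sqrt s = s := Real.mul_self_sqrt (le_of_lt h0)
  have h2 : 0 < Real.sqrt s := Real.sqrt_pos.mpr h0
  refine ⟨h1, h2, ?_⟩
  rw [inv_mul_eq_div, div_eq_iff (ne_of_gt h2), h1]

lemma gbound {p : ℕ} (s : ℕ) (hs : 1 ≤ s) (x : Fin p → ℝ) (C : ℝ) (hC : 0 ≤ C)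
    (G : Finset (Fin p) → ℝ)
    (hadd : ∀ B R : Finset (Fin p), Disjoint B R → G (B ∪ R) = G B + G R)
    (hblk : ∀ B : Finset (Fin p), B.card ≤ s → |G B| ≤ C * Real.sqrt (∑ i ∈ B, x i ^ 2)) :
    ∀ (N : ℕ) (R : Finset (Fin p)) (b : ℝ), R.card ≤ N → 0 ≤ b → (∀ i ∈ R, |x i| ≤ b) →
      |G R| ≤ C * (Real.sqrt s)⁻¹ * ((s : ℝ) * b + ∑ i ∈ R, |x i|) := by
  obtain ⟨hss, hsp, hsinv⟩ := sqrts_facts hs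
  have hsinv0 : 0 ≤ (Real.sqrt s)⁻¹ := le_of_lt (inv_pos.mpr hsp)
  -- single block estimate
  have hsingle : ∀ (B : Finset (Fin p)) (b : ℝ), B.card ≤ s → 0 ≤ b →
      (∀ i ∈ B, |x i| ≤ b) → |G B| ≤ C * (Real.sqrt s)⁻¹ * ((s : ℝ) * b) := by
    intro B b hBs hb hbd
    have h2 : ∑ i ∈ B, x i ^ 2 ≤ (s : ℝ) * b ^ 2 := by
      calc ∑ i ∈ B, x i ^ 2 ≤ ∑ _i ∈ B, b ^ 2 := by
            apply Finset.sum_le_sum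
            intro i hi
            have := hbd i hi
            nlinarith [abs_nonneg (x i), sq_abs (x i)]
        _ = (B.card : ℝ) * b ^ 2 := by rw [Finset.sum_const, nsmul_eq_mul]
        _ ≤ (s : ℝ) * b ^ 2 := by
            apply mul_le_mul_of_nonneg_right _ (sq_nonneg b)
            exact_mod_cast hBs
    have h3 : Real.sqrt (∑ i ∈ B, x i ^ 2) ≤ Real.sqrt s * b := by
      rw [show Real.sqrt s * b = Real.sqrt ((s:ℝ) * b ^ 2) by
        rw [Real.sqrt_mul (by positivity), Real.sqrt_sq hb]]
      exact Real.sqrt_le_sqrt h2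
    calc |G B| ≤ C * Real.sqrt (∑ i ∈ B, x i ^ 2) := hblk B hBs
      _ ≤ C * (Real.sqrt s * b) := mul_le_mul_of_nonneg_left h3 hC
      _ = C * (Real.sqrt s)⁻¹ * ((s : ℝ) * b) := by
          linear_combination (-(C * b)) * hsinv
  intro N
  induction N with
  | zero =>
    intro R b hcard hb hbd
    have hR : R = ∅ := Finset.card_eq_zero.mp (Nat.le_zero.mp hcard)
    subst hR
    calc |G ∅| ≤ C * (Real.sqrt s)⁻¹ * ((s:ℝ) * b) :=
          hsingle ∅ b (by simp) hb (by simp)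
      _ ≤ _ := by simp
  | succ N IH =>
    intro R b hcard hb hbd
    by_cases hRs : R.card ≤ s
    · have := hsingle R b hRs hb hbd
      have hl1 : 0 ≤ ∑ i ∈ R, |x i| := Finset.sum_nonneg fun i _ => abs_nonneg _
      nlinarith [mul_nonneg hC hsinv0]
    · push_neg at hRs
      obtain ⟨B, hBR, hBc, hBt⟩ := exists_top (fun i => |x i|) s R (le_of_lt hRs)
      have hBne : B.Nonempty := Finset.card_pos.mp (by omega)
      obtain ⟨i0, hi0B, hi0min⟩ := Finset.exists_min_image B (fun i => |x i|) hBne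
      set b' := |x i0| with hb'
      have hb'0 : 0 ≤ b' := abs_nonneg _
      have hbb' : b' ≤ b := hbd i0 (hBR hi0B)
      have hR' : (R \ B).card ≤ N := by
        rw [Finset.card_sdiff_of_subset hBR]; omega
      have hbd' : ∀ j ∈ R \ B, |x j| ≤ b' := fun j hj => hBt i0 hi0B j hj
      have IH' := IH (R \ B) b' hR' hb'0 hbd'
      have hsplit : G R = G B + G (R \ B) := by
        rw [← hadd B (R \ B) Finset.disjoint_sdiff, Finset.union_sdiff_of_subset hBR]
      have hGB : |G B| ≤ C * (Real.sqrt s)⁻¹ * ((s:ℝ) * b) :=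
        hsingle B b (le_of_eq hBc) hb (fun i hi => hbd i (hBR hi))
      have hsb' : (s : ℝ) * b' ≤ ∑ i ∈ B, |x i| := by
        calc (s : ℝ) * b' = ∑ _i ∈ B, b' := by
              rw [Finset.sum_const, nsmul_eq_mul, hBc]
          _ ≤ ∑ i ∈ B, |x i| := Finset.sum_le_sum fun i hi => hi0min i hi
      have hsum : (∑ i ∈ R \ B, |x i|) + ∑ i ∈ B, |x i| = ∑ i ∈ R, |x i| :=
        Finset.sum_sdiff hBR
      have htri : |G R| ≤ |G B| + |G (R \ B)| := by
        rw [hsplit]; exact abs_add_le _ _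
      have hmono : C * (Real.sqrt s)⁻¹ * ((s:ℝ) * b') ≤
          C * (Real.sqrt s)⁻¹ * (∑ i ∈ B, |x i|) :=
        mul_le_mul_of_nonneg_left hsb' (mul_nonneg hC hsinv0)
      nlinarith [mul_nonneg hC hsinv0]

lemma l1norm_nonneg {k : ℕ} (v : Fin k → ℝ) : 0 ≤ l1norm v :=
  Finset.sum_nonneg fun i _ => abs_nonneg _

lemma l2norm_contract {n p : ℕ} (D : Matrix (Fin n) (Fin p) ℝ) (htf : D * D.transpose = 1)
    (w : Fin p → ℝ) : l2norm (D.mulVec w) ≤ l2norm w := by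
  rw [l2norm_eq, l2norm_eq]
  exact Real.sqrt_le_sqrt (contract D htf w)


set_option maxHeartbeats 1000000 in
/-- D-RIP property: with `D` a tight frame, `T₀` of size `s`, and `T₁`
the indices of the `s` largest entries of `|Dᵀh|` inside `T₀ᶜ`,
`Re⟨Ah, ADDᵀ_{T₀₁}h⟩ ≥ (1−σ_{2s})‖Dᵀ_{T₀₁}h‖₂² − √2·s^{−1/2}·σ_{2s}·‖Dᵀ_{T₀₁}h‖₂·‖Dᵀ_{T^c}h‖₁`. -/
theorem drip_property
    {m n p s : ℕ} (hs : 1 ≤ s)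
    (A : Matrix (Fin m) (Fin n) ℝ) (D : Matrix (Fin n) (Fin p) ℝ)
    (htf : D * D.transpose = 1) (σ : ℝ) (hA : DRIP A D (2 * s) σ)
    (h : Fin n → ℝ) (T0 T1 : Finset (Fin p))
    (hT0card : T0.card = s)
    (hT1sub : T1 ⊆ T0ᶜ)
    (hT1card : T1.card = min s T0ᶜ.card)
    (hT1big : ∀ i ∈ T1, ∀ j ∈ T0ᶜ \ T1,
      |D.transpose.mulVec h j| ≤ |D.transpose.mulVec h i|) :
    dotp (A.mulVec h)
        (A.mulVec (D.mulVec (restr (T0 ∪ T1) (D.transpose.mulVec h))))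
      ≥ (1 - σ) * (l2norm (restr (T0 ∪ T1) (D.transpose.mulVec h))) ^ 2
        - Real.sqrt 2 * (Real.sqrt (s : ℝ))⁻¹ * σ
            * l2norm (restr (T0 ∪ T1) (D.transpose.mulVec h))
            * l1norm (restr T0ᶜ (D.transpose.mulVec h)) := by
  classical
  by_cases hD : D = (0 : Matrix (Fin n) (Fin p) ℝ)
  · subst hD
    simp [restr, l2norm, l1norm, dotp, Matrix.zero_mulVec, Matrix.mulVec_zero,
      Matrix.transpose_zero]
  have hσ : 0 ≤ σ := by
    have hex : ∃ k i, D k i ≠ 0 := by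
      by_contra hc
      push_neg at hc
      exact hD (by ext k i; exact hc k i)
    obtain ⟨k, i, hki⟩ := hex
    have hl0 : l0norm (Pi.single i 1 : Fin p → ℝ) ≤ 2 * s := by
      have hsub : (Finset.univ.filter (fun j => (Pi.single i 1 : Fin p → ℝ) j ≠ 0))
          ⊆ {i} := by
        intro j hj
        simp only [Finset.mem_filter, Finset.mem_univ, true_and] at hj
        rw [Finset.mem_singleton]
        by_contra hji
        exact hj (Pi.single_eq_of_ne hji 1)
      have hcard := Finset.card_le_card hsub
      simp only [Finset.card_singleton] at hcard
      calc l0norm (Pi.single i 1 : Fin p → ℝ) ≤ 1 := hcard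
        _ ≤ 2 * s := by omega
    have hDw : D.mulVec (Pi.single i 1) = fun r => D r i := by
      funext r
      simp [Matrix.mulVec_single]
    have hq : 0 < sq2 (D.mulVec (Pi.single i 1)) := by
      rw [hDw]
      have hrw : sq2 (fun r => D r i) = ∑ r, D r i ^ 2 := rfl
      rw [hrw]
      have hpos : (0:ℝ) < D k i ^ 2 := by positivity
      exact lt_of_lt_of_le hpos
        (Finset.single_le_sum (f := fun r => D r i ^ 2) (fun r _ => sq_nonneg _)
          (Finset.mem_univ k))
    obtain ⟨lo, up⟩ := hA (Pi.single i 1) hl0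
    rw [l2norm_sq, l2norm_sq] at lo up
    nlinarith [le_trans lo up]
  set x : Fin p → ℝ := D.transpose.mulVec h with hxdef
  set x0 := restr T0 x with hx0
  set x1 := restr T1 x with hx1
  set x01 := restr (T0 ∪ T1) x with hx01d
  set R : Finset (Fin p) := (T0 ∪ T1)ᶜ with hRdef
  set xR := restr R x with hxRdef
  have hd01 : Disjoint T0 T1 := by
    rw [Finset.disjoint_left]
    intro a ha haT1
    exact (Finset.mem_compl.mp (hT1sub haT1)) ha
  have hx01split : x01 = x0 + x1 := restr_union_disj hd01 x
  have hxsplit : x01 + xR = x := restr_add_compl (T0 ∪ T1) x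
  have hhD : D.mulVec x = h := by
    rw [hxdef, Matrix.mulVec_mulVec, htf, Matrix.one_mulVec]
  have hT1s : T1.card ≤ s := by rw [hT1card]; exact min_le_left _ _
  have hl0x01 : l0norm x01 ≤ 2 * s := by
    calc l0norm x01 ≤ (T0 ∪ T1).card := l0norm_restr_le _ _
      _ ≤ T0.card + T1.card := Finset.card_union_le _ _
      _ ≤ 2 * s := by omega
  set C : ℝ := σ * (l2norm x0 + l2norm x1) with hCdef
  have hC0 : 0 ≤ C := mul_nonneg hσ (add_nonneg (l2norm_nonneg _) (l2norm_nonneg _))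
  set G : Finset (Fin p) → ℝ := fun S =>
    (dotp (A.mulVec (D.mulVec (restr S x))) (A.mulVec (D.mulVec x0))
      - dotp (D.mulVec (restr S x)) (D.mulVec x0))
    + (dotp (A.mulVec (D.mulVec (restr S x))) (A.mulVec (D.mulVec x1))
      - dotp (D.mulVec (restr S x)) (D.mulVec x1)) with hGdef
  have hadd : ∀ B S : Finset (Fin p), Disjoint B S → G (B ∪ S) = G B + G S := by
    intro B S hBS
    simp only [hGdef]
    rw [restr_union_disj hBS, Matrix.mulVec_add, Matrix.mulVec_add,
      dotp_add_left, dotp_add_left, dotp_add_left, dotp_add_left]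
    ring
  have hblk : ∀ B : Finset (Fin p), B.card ≤ s →
      |G B| ≤ C * Real.sqrt (∑ i ∈ B, x i ^ 2) := by
    intro B hBs
    have hsp0 : l0norm (restr B x) + l0norm x0 ≤ 2 * s := by
      have h1 := l0norm_restr_le B x
      have h2 := l0norm_restr_le T0 x
      rw [hx0]
      omega
    have hsp1 : l0norm (restr B x) + l0norm x1 ≤ 2 * s := by
      have h1 := l0norm_restr_le B x
      have h2 := l0norm_restr_le T1 x
      rw [hx1]
      omega
    have hc0 := cross_prod hA (restr B x) x0 hsp0
    have hc1 := cross_prod hA (restr B x) x1 hsp1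
    have hcB := l2norm_contract D htf (restr B x)
    have hcx0 := l2norm_contract D htf x0
    have hcx1 := l2norm_contract D htf x1
    have hnB := l2norm_nonneg (restr B x)
    have hnDB := l2norm_nonneg (D.mulVec (restr B x))
    have hnD0 := l2norm_nonneg (D.mulVec x0)
    have hnD1 := l2norm_nonneg (D.mulVec x1)
    have hn0 := l2norm_nonneg x0
    have hn1 := l2norm_nonneg x1
    have hb0 : σ * l2norm (D.mulVec (restr B x)) * l2norm (D.mulVec x0)
        ≤ σ * l2norm (restr B x) * l2norm x0 := by
      apply mul_le_mul
      · exact mul_le_mul_of_nonneg_left hcB hσ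
      · exact hcx0
      · exact hnD0
      · positivity
    have hb1 : σ * l2norm (D.mulVec (restr B x)) * l2norm (D.mulVec x1)
        ≤ σ * l2norm (restr B x) * l2norm x1 := by
      apply mul_le_mul
      · exact mul_le_mul_of_nonneg_left hcB hσ
      · exact hcx1
      · exact hnD1
      · positivity
    have hsqrt : Real.sqrt (∑ i ∈ B, x i ^ 2) = l2norm (restr B x) := by
      rw [l2norm_eq, sq2_restr]
    rw [hsqrt]
    simp only [hGdef]
    calc |(dotp (A.mulVec (D.mulVec (restr B x))) (A.mulVec (D.mulVec x0))
            - dotp (D.mulVec (restr B x)) (D.mulVec x0))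
          + (dotp (A.mulVec (D.mulVec (restr B x))) (A.mulVec (D.mulVec x1))
            - dotp (D.mulVec (restr B x)) (D.mulVec x1))|
        ≤ |dotp (A.mulVec (D.mulVec (restr B x))) (A.mulVec (D.mulVec x0))
            - dotp (D.mulVec (restr B x)) (D.mulVec x0)|
          + |dotp (A.mulVec (D.mulVec (restr B x))) (A.mulVec (D.mulVec x1))
            - dotp (D.mulVec (restr B x)) (D.mulVec x1)| := abs_add_le _ _
      _ ≤ σ * l2norm (restr B x) * l2norm x0 + σ * l2norm (restr B x) * l2norm x1 := by
          have := le_trans hc0 hb0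
          have := le_trans hc1 hb1
          linarith
      _ = C * l2norm (restr B x) := by rw [hCdef]; ring
  -- disjointness and union facts for T1 and R
  have hT1R : Disjoint T1 R := by
    rw [Finset.disjoint_left]
    intro a ha haR
    rw [hRdef, Finset.mem_compl] at haR
    exact haR (Finset.mem_union_right _ ha)
  have hT1uR : T1 ∪ R = T0ᶜ := by
    ext a
    by_cases h1 : a ∈ T1 <;> by_cases h0 : a ∈ T0 <;>
      simp [h1, h0, hRdef, Finset.mem_union, Finset.mem_compl]
    · exact absurd h0 (Finset.mem_compl.mp (hT1sub h1))
  have hl1eq : l1norm (restr T0ᶜ x) = (∑ i ∈ T1, |x i|) + ∑ i ∈ R, |x i| := by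
    rw [show l1norm (restr T0ᶜ x) = ∑ i, |restr T0ᶜ x i| from rfl, l1norm_restr,
      ← hT1uR, Finset.sum_union hT1R]
  have hL0 : 0 ≤ l1norm (restr T0ᶜ x) := l1norm_nonneg _
  obtain ⟨hss, hsp, hsinv⟩ := sqrts_facts hs
  have hsinv0 : 0 ≤ (Real.sqrt (s:ℝ))⁻¹ := le_of_lt (inv_pos.mpr hsp)
  have hGR : |G R| ≤ C * (Real.sqrt (s:ℝ))⁻¹ * l1norm (restr T0ᶜ x) := by
    by_cases hcase : s ≤ T0ᶜ.card
    · have hT1c : T1.card = s := by rw [hT1card]; omega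
      have hT1ne : T1.Nonempty := Finset.card_pos.mp (by omega)
      obtain ⟨i1, hi1, hmin1⟩ := Finset.exists_min_image T1 (fun i => |x i|) hT1ne
      have hbd : ∀ i ∈ R, |x i| ≤ |x i1| := by
        intro i hiR
        apply hT1big i1 hi1 i
        rw [Finset.mem_sdiff]
        rw [hRdef, Finset.mem_compl, Finset.mem_union] at hiR
        push_neg at hiR
        exact ⟨Finset.mem_compl.mpr hiR.1, hiR.2⟩
      have hmain := gbound s hs x C hC0 G hadd hblk R.card R (|x i1|) le_rfl
        (abs_nonneg _) hbd
      have hsb : (s:ℝ) * |x i1| ≤ ∑ i ∈ T1, |x i| := by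
        calc (s:ℝ) * |x i1| = ∑ _i ∈ T1, |x i1| := by
              rw [Finset.sum_const, nsmul_eq_mul, hT1c]
          _ ≤ ∑ i ∈ T1, |x i| := Finset.sum_le_sum fun i hi => hmin1 i hi
      rw [hl1eq]
      nlinarith [mul_nonneg hC0 hsinv0]
    · push_neg at hcase
      have hT1eq : T1 = T0ᶜ := Finset.eq_of_subset_of_card_le hT1sub
        (by rw [hT1card]; omega)
      have hRempty : R = ∅ := by
        rw [hRdef, hT1eq, Finset.union_compl, Finset.compl_univ]
      have h0 := hblk ∅ (by simp)
      simp only [Finset.sum_empty, Real.sqrt_zero, mul_zero] at h0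
      rw [hRempty]
      have hrhs : 0 ≤ C * (Real.sqrt (s:ℝ))⁻¹ * l1norm (restr T0ᶜ x) := by positivity
      linarith
  -- key decomposition
  have key1 : dotp (A.mulVec h) (A.mulVec (D.mulVec x01))
      = dotp (A.mulVec (D.mulVec x01)) (A.mulVec (D.mulVec x01)) + G R
        + (dotp (D.mulVec xR) (D.mulVec x0) + dotp (D.mulVec xR) (D.mulVec x1)) := by
    conv_lhs => rw [← hhD, ← hxsplit]
    rw [Matrix.mulVec_add, Matrix.mulVec_add, dotp_add_left]
    have hx01exp : dotp (A.mulVec (D.mulVec xR)) (A.mulVec (D.mulVec x01))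
        = dotp (A.mulVec (D.mulVec xR)) (A.mulVec (D.mulVec x0))
          + dotp (A.mulVec (D.mulVec xR)) (A.mulVec (D.mulVec x1)) := by
      rw [hx01split, Matrix.mulVec_add, Matrix.mulVec_add, dotp_add_right]
    rw [hx01exp]
    simp only [hGdef]
    rw [← hxRdef]
    ring
  have key2 : dotp (D.mulVec xR) (D.mulVec x0) + dotp (D.mulVec xR) (D.mulVec x1)
      = sq2 x01 - sq2 (D.mulVec x01) := by
    have e : dotp (D.mulVec xR) (D.mulVec x0) + dotp (D.mulVec xR) (D.mulVec x1)
        = dotp (D.mulVec xR) (D.mulVec x01) := by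
      rw [hx01split, Matrix.mulVec_add, dotp_add_right]
    have exR : xR = x - x01 := by
      rw [← hxsplit]; funext i; simp
    rw [e, exR, Matrix.mulVec_sub, dotp_sub_left, hhD, dotp_mulVec_right, ← hxdef,
      dotp_self]
    have : dotp x x01 = sq2 x01 := by
      rw [hx01d]
      exact dotp_restr_self (T0 ∪ T1) x
    rw [this]
  have hDRIPlow : (1 - σ) * sq2 (D.mulVec x01)
      ≤ dotp (A.mulVec (D.mulVec x01)) (A.mulVec (D.mulVec x01)) := by
    obtain ⟨lo, _⟩ := hA x01 hl0x01
    rw [l2norm_sq, l2norm_sq] at lo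
    rw [dotp_self]
    exact lo
  have hcontr : sq2 (D.mulVec x01) ≤ sq2 x01 := contract D htf x01
  have hsqrt2 : l2norm x0 + l2norm x1 ≤ Real.sqrt 2 * l2norm x01 := by
    have hsq : l2norm x0 ^ 2 + l2norm x1 ^ 2 = l2norm x01 ^ 2 := by
      rw [l2norm_sq, l2norm_sq, l2norm_sq, hx0, hx1, hx01d, sq2_restr, sq2_restr,
        sq2_restr, ← Finset.sum_union hd01]
    have h2 : (l2norm x0 + l2norm x1) ^ 2 ≤ 2 * l2norm x01 ^ 2 := by
      nlinarith [sq_nonneg (l2norm x0 - l2norm x1)]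
    have h3 := Real.sqrt_le_sqrt h2
    rw [Real.sqrt_sq (add_nonneg (l2norm_nonneg _) (l2norm_nonneg _))] at h3
    rw [show Real.sqrt (2 * l2norm x01 ^ 2) = Real.sqrt 2 * l2norm x01 by
      rw [Real.sqrt_mul (by norm_num), Real.sqrt_sq (l2norm_nonneg _)]] at h3
    exact h3
  have hCle : C ≤ Real.sqrt 2 * σ * l2norm x01 := by
    rw [hCdef]
    calc σ * (l2norm x0 + l2norm x1) ≤ σ * (Real.sqrt 2 * l2norm x01) :=
          mul_le_mul_of_nonneg_left hsqrt2 hσ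
      _ = Real.sqrt 2 * σ * l2norm x01 := by ring
  -- finish
  rw [ge_iff_le, l2norm_sq]
  have hGlow : -(C * (Real.sqrt (s:ℝ))⁻¹ * l1norm (restr T0ᶜ x)) ≤ G R := by
    exact le_trans (neg_le_neg hGR) (neg_abs_le _)
  have hfin1 : C * (Real.sqrt (s:ℝ))⁻¹ * l1norm (restr T0ᶜ x)
      ≤ Real.sqrt 2 * (Real.sqrt (s:ℝ))⁻¹ * σ * l2norm x01 * l1norm (restr T0ᶜ x) := by
    have step : C * (Real.sqrt (s:ℝ))⁻¹ ≤ Real.sqrt 2 * σ * l2norm x01 * (Real.sqrt (s:ℝ))⁻¹ :=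
      mul_le_mul_of_nonneg_right hCle hsinv0
    calc C * (Real.sqrt (s:ℝ))⁻¹ * l1norm (restr T0ᶜ x)
        ≤ Real.sqrt 2 * σ * l2norm x01 * (Real.sqrt (s:ℝ))⁻¹ * l1norm (restr T0ᶜ x) :=
          mul_le_mul_of_nonneg_right step hL0
      _ = Real.sqrt 2 * (Real.sqrt (s:ℝ))⁻¹ * σ * l2norm x01 * l1norm (restr T0ᶜ x) := by
          ring
  have hσc : σ * sq2 (D.mulVec x01) ≤ σ * sq2 x01 := mul_le_mul_of_nonneg_left hcontr hσ
  rw [key1, key2]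
  linarith [hDRIPlow, hGlow, hfin1, hσc]
end

section
/- Let A ∈ ℝ^{m×n}, D ∈ ℝ^{n×p}, b ∈ ℝᵐ, λ > 0 and ρ > 0, and let (x̂_ρ, ẑ_ρ) be a minimizer of the RALASSO problem min_{x∈ℝⁿ, z∈ℝᵖ} (1/2)‖Ax − b‖₂² + λ‖z‖₁ + (ρ/2)‖z − Dᵀx‖₂². Then ‖DᵀAᵀ(Ax̂_ρ − b)‖_∞ ≤ λ·‖DᵀD‖_{1,1}. -/
open scoped BigOperators

/-- ℓ∞ norm of a vector in ℝᵏ. -/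
noncomputable def linfnorm {k : ℕ} (v : Fin k → ℝ) : ℝ := ⨆ i, |v i|

/-- The induced `(1,1)` matrix norm: `‖M‖_{1,1} = sup_{x ≠ 0} ‖Mx‖₁ / ‖x‖₁`. -/
noncomputable def matnorm11 {a b : ℕ} (M : Matrix (Fin a) (Fin b) ℝ) : ℝ :=
  ⨆ x : {x : Fin b → ℝ // x ≠ 0}, l1norm (M.mulVec x.1) / l1norm x.1


lemma l2sq {k : ℕ} (v : Fin k → ℝ) : l2norm v ^ 2 = ∑ i, v i ^ 2 :=
  Real.sq_sqrt (Finset.sum_nonneg fun i _ => sq_nonneg _)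

lemma quad_coeff_zero (c q : ℝ) (hq : 0 ≤ q) (h : ∀ t : ℝ, 0 ≤ t * c + t ^ 2 * q) : c = 0 := by
  by_contra hc
  have h1 := h (-c / (q + 1))
  have hq1 : (0:ℝ) < q + 1 := by linarith
  have hne : q + 1 ≠ 0 := ne_of_gt hq1
  have h2 : (0:ℝ) < c ^ 2 := by positivity
  have keq : (-c / (q + 1) * c + (-c / (q + 1)) ^ 2 * q) * (q + 1) ^ 2
      = -(c ^ 2) := by field_simp; ring
  have key : 0 ≤ -(c ^ 2) := keq ▸ mul_nonneg h1 (by positivity)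
  nlinarith

lemma abs_le_of_subgrad (lam ρ w : ℝ) (hρ : 0 < ρ)
    (h : ∀ t : ℝ, 0 ≤ lam * |t| + t * w + ρ / 2 * t ^ 2) : |w| ≤ lam := by
  by_contra hw
  push_neg at hw
  have hr : ρ ≠ 0 := ne_of_gt hρ
  rcases le_or_gt 0 w with h0 | h0
  · have hab : |w| = w := abs_of_nonneg h0
    have hε : 0 < (w - lam) / ρ := div_pos (by rw [hab] at hw; linarith) hρ
    have hh := h (-((w - lam) / ρ))
    rw [abs_neg, abs_of_pos hε] at hh
    have keq : (lam * ((w - lam) / ρ) + -((w - lam) / ρ) * w + ρ / 2 * (-((w - lam) / ρ)) ^ 2) * ρ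
        = -((w - lam) ^ 2) / 2 := by field_simp; ring
    have key : 0 ≤ -((w - lam) ^ 2) / 2 := keq ▸ mul_nonneg hh hρ.le
    rw [hab] at hw
    nlinarith
  · have hab : |w| = -w := abs_of_neg h0
    have hε : 0 < (-w - lam) / ρ := div_pos (by rw [hab] at hw; linarith) hρ
    have hh := h ((-w - lam) / ρ)
    rw [abs_of_pos hε] at hh
    have keq : (lam * ((-w - lam) / ρ) + (-w - lam) / ρ * w + ρ / 2 * ((-w - lam) / ρ) ^ 2) * ρ
        = -((w + lam) ^ 2) / 2 := by field_simp; ring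
    have key : 0 ≤ -((w + lam) ^ 2) / 2 := keq ▸ mul_nonneg hh hρ.le
    rw [hab] at hw
    nlinarith

lemma sum_sq_expand {k : ℕ} (r a : Fin k → ℝ) (t : ℝ) :
    ∑ i, (r i + t * a i) ^ 2
      = (∑ i, r i ^ 2) + t * (2 * ∑ i, r i * a i) + t ^ 2 * ∑ i, a i ^ 2 := by
  rw [Finset.mul_sum, Finset.mul_sum, Finset.mul_sum, ← Finset.sum_add_distrib,
    ← Finset.sum_add_distrib]
  exact Finset.sum_congr rfl fun i _ => by ring

lemma sum_update' {k : ℕ} (i : Fin k) (f : Fin k → ℝ) (c : ℝ) (F : Fin k → ℝ → ℝ) :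
    ∑ j, F j (Function.update f i c j) = (∑ j, F j (f j)) - F i (f i) + F i c := by
  rw [Finset.sum_eq_sum_sdiff_singleton_add (Finset.mem_univ i)
      (fun j => F j (Function.update f i c j)),
    Finset.sum_eq_sum_sdiff_singleton_add (Finset.mem_univ i) (fun j => F j (f j))]
  have hdiff : ∑ j ∈ Finset.univ \ {i}, F j (Function.update f i c j)
      = ∑ j ∈ Finset.univ \ {i}, F j (f j) := by
    refine Finset.sum_congr rfl fun j hj => ?_
    rw [Function.update_of_ne (by simpa using (Finset.mem_sdiff.mp hj).2)]
  rw [hdiff, Function.update_self]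
  ring

lemma l1norm_pos {k : ℕ} (x : Fin k → ℝ) (hx : x ≠ 0) : 0 < l1norm x := by
  obtain ⟨j, hj⟩ := Function.ne_iff.mp hx
  exact Finset.sum_pos' (fun i _ => abs_nonneg _) ⟨j, Finset.mem_univ j, abs_pos.mpr hj⟩

lemma mulVec_add_single {a b : ℕ} (M : Matrix (Fin a) (Fin b) ℝ) (x : Fin b → ℝ) (t : ℝ)
    (k : Fin b) (i : Fin a) :
    M.mulVec (fun j => x j + t * (if j = k then 1 else 0)) i = M.mulVec x i + t * M i k := by
  simp only [Matrix.mulVec, dotProduct, mul_add]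
  rw [Finset.sum_add_distrib]
  congr 1
  rw [Finset.sum_congr rfl (fun j _ => show M i j * (t * if j = k then (1:ℝ) else 0)
      = if j = k then t * M i k else 0 by split <;> simp_all <;> ring)]
  simp

/-- any minimizer `(x̂_ρ, ẑ_ρ)` of RALASSO satisfies
`‖DᵀAᵀ(Ax̂_ρ − b)‖_∞ ≤ λ‖DᵀD‖_{1,1}`. -/
theorem ralasso_stationarity_bound
    {m n p : ℕ} (A : Matrix (Fin m) (Fin n) ℝ) (D : Matrix (Fin n) (Fin p) ℝ)
    (b : Fin m → ℝ) (lam ρ : ℝ) (hlam : 0 < lam) (hρ : 0 < ρ)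
    (xh : Fin n → ℝ) (zh : Fin p → ℝ)
    (hmin : ∀ (x : Fin n → ℝ) (z : Fin p → ℝ),
      1 / 2 * (l2norm (A.mulVec xh - b)) ^ 2 + lam * l1norm zh
          + ρ / 2 * (l2norm (zh - D.transpose.mulVec xh)) ^ 2
        ≤ 1 / 2 * (l2norm (A.mulVec x - b)) ^ 2 + lam * l1norm z
          + ρ / 2 * (l2norm (z - D.transpose.mulVec x)) ^ 2) :
    linfnorm (D.transpose.mulVec (A.transpose.mulVec (A.mulVec xh - b)))
      ≤ lam * matnorm11 (D.transpose * D) := by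

  set r : Fin m → ℝ := fun i => A.mulVec xh i - b i with hr
  set s : Fin p → ℝ := fun j => zh j - D.transpose.mulVec xh j with hs
  set M : Matrix (Fin p) (Fin p) ℝ := D.transpose * D with hM
  -- Step A: stationarity in x
  have stepA : ∀ k : Fin n,
      ∑ i, r i * A i k = ρ * ∑ j, s j * D.transpose j k := by
    intro k
    have hq : 0 ≤ (∑ i, (A i k) ^ 2) / 2 + ρ / 2 * ∑ j, (D.transpose j k) ^ 2 := by positivity
    have hc := quad_coeff_zero ((∑ i, r i * A i k) - ρ * ∑ j, s j * D.transpose j k)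
      _ hq ?_
    · linarith
    intro t
    have h := hmin (fun j' => xh j' + t * (if j' = k then 1 else 0)) zh
    have e1 : l2norm (A.mulVec (fun j' => xh j' + t * (if j' = k then 1 else 0)) - b) ^ 2
        = (∑ i, r i ^ 2) + t * (2 * ∑ i, r i * A i k) + t ^ 2 * ∑ i, (A i k) ^ 2 := by
      rw [l2sq, ← sum_sq_expand r (fun i => A i k) t]
      refine Finset.sum_congr rfl fun i _ => ?_
      rw [Pi.sub_apply, mulVec_add_single]
      simp only [hr]
      ring_nf
    have e2 : l2norm (zh - D.transpose.mulVec
          (fun j' => xh j' + t * (if j' = k then 1 else 0))) ^ 2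
        = (∑ j, s j ^ 2) + (-t) * (2 * ∑ j, s j * D.transpose j k)
            + (-t) ^ 2 * ∑ j, (D.transpose j k) ^ 2 := by
      rw [l2sq, ← sum_sq_expand s (fun j => D.transpose j k) (-t)]
      refine Finset.sum_congr rfl fun j _ => ?_
      rw [Pi.sub_apply, mulVec_add_single]
      simp only [hs]
      ring_nf
    rw [e1, e2] at h
    have e3 : l2norm (A.mulVec xh - b) ^ 2 = ∑ i, r i ^ 2 := by
      rw [l2sq]; exact Finset.sum_congr rfl fun i _ => by simp [hr]
    have e4 : l2norm (zh - D.transpose.mulVec xh) ^ 2 = ∑ j, s j ^ 2 := by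
      rw [l2sq]; exact Finset.sum_congr rfl fun j _ => by simp [hs]
    rw [e3, e4] at h
    nlinarith [h]
  -- Step B: subgradient condition in z
  have stepB : ∀ j : Fin p, |ρ * s j| ≤ lam := by
    intro i
    apply abs_le_of_subgrad lam ρ _ hρ
    intro t
    have h := hmin xh (Function.update zh i (zh i + t))
    have e1 : l1norm (Function.update zh i (zh i + t))
        = l1norm zh - |zh i| + |zh i + t| :=
      sum_update' i zh (zh i + t) (fun _ v => |v|)
    have e2 : l2norm (Function.update zh i (zh i + t) - D.transpose.mulVec xh) ^ 2
        = (∑ j, s j ^ 2) - s i ^ 2 + (s i + t) ^ 2 := by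
      rw [l2sq]
      have := sum_update' i zh (zh i + t) (fun j v => (v - D.transpose.mulVec xh j) ^ 2)
      simp only [Pi.sub_apply]
      rw [this]
      have : zh i + t - D.transpose.mulVec xh i = s i + t := by simp [hs]; ring
      rw [this]
    have e4 : l2norm (zh - D.transpose.mulVec xh) ^ 2 = ∑ j, s j ^ 2 := by
      rw [l2sq]; exact Finset.sum_congr rfl fun j _ => by simp [hs]
    rw [e1, e2, e4] at h
    have habs : |zh i + t| ≤ |zh i| + |t| := abs_add_le _ _
    nlinarith [mul_le_mul_of_nonneg_left habs hlam.le]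
  -- components of the target vector
  have hv : ∀ i : Fin p,
      D.transpose.mulVec (A.transpose.mulVec (A.mulVec xh - b)) i
        = ∑ j, M i j * (ρ * s j) := by
    intro i
    have hAr : ∀ k : Fin n, A.transpose.mulVec (A.mulVec xh - b) k
        = ρ * ∑ j, s j * D.transpose j k := by
      intro k
      rw [← stepA k]
      simp only [Matrix.mulVec, dotProduct, Matrix.transpose_apply, Pi.sub_apply]
      exact Finset.sum_congr rfl fun i' _ => by simp [hr, Matrix.mulVec, dotProduct]; ring
    calc D.transpose.mulVec (A.transpose.mulVec (A.mulVec xh - b)) i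
        = ∑ k, D.transpose i k * (A.transpose.mulVec (A.mulVec xh - b) k) := rfl
      _ = ∑ k, D.transpose i k * (ρ * ∑ j, s j * D.transpose j k) :=
          Finset.sum_congr rfl fun k _ => by rw [hAr k]
      _ = ∑ k, ∑ j, D.transpose i k * D.transpose j k * (ρ * s j) := by
          refine Finset.sum_congr rfl fun k _ => ?_
          simp only [Finset.mul_sum]
          exact Finset.sum_congr rfl fun j _ => by ring
      _ = ∑ j, ∑ k, D.transpose i k * D.transpose j k * (ρ * s j) := Finset.sum_comm
      _ = ∑ j, M i j * (ρ * s j) := by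
          refine Finset.sum_congr rfl fun j _ => ?_
          rw [hM, Matrix.mul_apply, Finset.sum_mul]
          exact Finset.sum_congr rfl fun k _ => by
            simp [Matrix.transpose_apply]
  -- symmetry of M
  have hMsym : ∀ i j, M i j = M j i := by
    intro i j
    simp only [hM, Matrix.mul_apply, Matrix.transpose_apply]
    exact Finset.sum_congr rfl fun k _ => mul_comm _ _
  -- bound on components
  have hcomp : ∀ i : Fin p,
      |D.transpose.mulVec (A.transpose.mulVec (A.mulVec xh - b)) i|
        ≤ lam * ∑ j, |M j i| := by
    intro i
    rw [hv i]
    calc |∑ j, M i j * (ρ * s j)| ≤ ∑ j, |M i j * (ρ * s j)| :=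
          Finset.abs_sum_le_sum_abs _ _
      _ = ∑ j, |M i j| * |ρ * s j| := by
          exact Finset.sum_congr rfl fun j _ => abs_mul _ _
      _ ≤ ∑ j, |M i j| * lam := Finset.sum_le_sum fun j _ =>
          mul_le_mul_of_nonneg_left (stepB j) (abs_nonneg _)
      _ = lam * ∑ j, |M j i| := by
          rw [Finset.mul_sum]
          exact Finset.sum_congr rfl fun j _ => by rw [hMsym i j]; ring
  -- boundedness of the sup defining matnorm11
  have hbdd : BddAbove (Set.range fun x : {x : Fin p → ℝ // x ≠ 0} =>
      l1norm (M.mulVec x.1) / l1norm x.1) := by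
    refine ⟨∑ i, ∑ j, |M i j|, ?_⟩
    rintro _ ⟨⟨x, hx⟩, rfl⟩
    rw [div_le_iff₀ (l1norm_pos x hx)]
    calc l1norm (M.mulVec x) = ∑ i, |∑ j, M i j * x j| := rfl
      _ ≤ ∑ i, ∑ j, |M i j| * |x j| := Finset.sum_le_sum fun i _ => by
          calc |∑ j, M i j * x j| ≤ ∑ j, |M i j * x j| := Finset.abs_sum_le_sum_abs _ _
            _ = ∑ j, |M i j| * |x j| := Finset.sum_congr rfl fun j _ => abs_mul _ _
      _ = ∑ j, (∑ i, |M i j|) * |x j| := by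
          rw [Finset.sum_comm]
          exact Finset.sum_congr rfl fun j _ => (Finset.sum_mul _ _ _).symm
      _ ≤ ∑ j, (∑ i, ∑ j', |M i j'|) * |x j| := Finset.sum_le_sum fun j _ => by
          refine mul_le_mul_of_nonneg_right ?_ (abs_nonneg _)
          refine Finset.sum_le_sum fun i _ => ?_
          exact Finset.single_le_sum (fun j' _ => abs_nonneg (M i j')) (Finset.mem_univ j)
      _ = (∑ i, ∑ j, |M i j|) * l1norm x := by
          rw [l1norm, Finset.mul_sum]
  have hnn : 0 ≤ matnorm11 M :=
    Real.iSup_nonneg fun x => div_nonneg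
      (Finset.sum_nonneg fun i _ => abs_nonneg _)
      (Finset.sum_nonneg fun i _ => abs_nonneg _)
  -- column sums bounded by the norm
  have hcol : ∀ i : Fin p, ∑ j, |M j i| ≤ matnorm11 M := by
    intro i
    have hne : (Pi.single i 1 : Fin p → ℝ) ≠ 0 := by
      intro h
      have := congrFun h i
      simp at this
    have hle := le_ciSup hbdd (⟨Pi.single i 1, hne⟩ : {x : Fin p → ℝ // x ≠ 0})
    have h1 : l1norm (M.mulVec (Pi.single i 1)) = ∑ j, |M j i| := by
      refine Finset.sum_congr rfl fun j _ => ?_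
      congr 1
      simp [Matrix.mulVec, dotProduct, Pi.single_apply]
    have h2 : l1norm (Pi.single i 1 : Fin p → ℝ) = 1 := by
      simp [l1norm, Pi.single_apply, apply_ite abs]
    rw [h1, h2, div_one] at hle
    exact hle
  -- conclude
  refine Real.iSup_le (fun i => ?_) (mul_nonneg hlam.le hnn)
  exact le_trans (hcomp i) (mul_le_mul_of_nonneg_left (hcol i) hlam.le)
end

section
/- (Shelling inequality.) Let v ∈ ℝᵖ, let S ⊆ {1,…,p}, and partition S into disjoint sets T₁, T₂, … each of size at most s, where T₁ contains indices of the s largest-magnitude entries of v within S, T₂ the indices of the next s largest-magnitude entries, and so on (so min_{i∈T_j}|v_i| ≥ max_{i∈T_{j+1}}|v_i| for all j ≥ 1). Then Σ_{j≥2} ‖v_{T_j}‖₂ ≤ s^{−1/2}·‖v_S‖₁. -/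
open scoped BigOperators

lemma l1_restr {p : ℕ} (A : Finset (Fin p)) (v : Fin p → ℝ) :
    l1norm (restr A v) = ∑ i ∈ A, |v i| := by
  simp [l1norm, restr, apply_ite abs, Finset.sum_ite_mem]

lemma l2_restr {p : ℕ} (A : Finset (Fin p)) (v : Fin p → ℝ) :
    l2norm (restr A v) = Real.sqrt (∑ i ∈ A, (v i) ^ 2) := by
  simp [l2norm, restr, apply_ite (· ^ 2), Finset.sum_ite_mem]

lemma l1_nonneg {p : ℕ} (w : Fin p → ℝ) : 0 ≤ l1norm w :=
  Finset.sum_nonneg fun i _ => abs_nonneg _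

lemma l2_nonneg_s14 {p : ℕ} (w : Fin p → ℝ) : 0 ≤ l2norm w := Real.sqrt_nonneg _

lemma step_lemma {p : ℕ} (v : Fin p → ℝ) (s : ℕ) (hs : 1 ≤ s)
    (A B : Finset (Fin p)) (hA : A.card = s) (hB : B.card ≤ s)
    (hsort : ∀ i ∈ A, ∀ i' ∈ B, |v i'| ≤ |v i|) :
    l2norm (restr B v) ≤ (Real.sqrt (s : ℝ))⁻¹ * l1norm (restr A v) := by
  have hspos : (0:ℝ) < s := by exact_mod_cast hs
  have hsq : (0:ℝ) < Real.sqrt s := Real.sqrt_pos.mpr hspos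
  rcases B.eq_empty_or_nonempty with rfl | hBne
  · rw [l2_restr]
    simp only [Finset.sum_empty, Real.sqrt_zero]
    exact mul_nonneg (le_of_lt (inv_pos.mpr hsq)) (l1_nonneg _)
  · obtain ⟨i₀, hi₀, hmax⟩ := B.exists_max_image (fun i => |v i|) hBne
    set M := |v i₀| with hM
    have hMnn : 0 ≤ M := abs_nonneg _
    have h2 : l2norm (restr B v) ≤ Real.sqrt s * M := by
      rw [l2_restr]
      have : ∑ i ∈ B, (v i)^2 ≤ (s:ℝ) * M^2 := by
        calc ∑ i ∈ B, (v i)^2 ≤ ∑ _i ∈ B, M^2 := by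
              apply Finset.sum_le_sum
              intro i hi
              rw [← sq_abs (v i)]
              exact pow_le_pow_left₀ (abs_nonneg _) (hmax i hi) 2
          _ = B.card * M^2 := by rw [Finset.sum_const, nsmul_eq_mul]
          _ ≤ (s:ℝ) * M^2 := by
              apply mul_le_mul_of_nonneg_right _ (sq_nonneg M)
              exact_mod_cast hB
      calc Real.sqrt (∑ i ∈ B, (v i)^2) ≤ Real.sqrt ((s:ℝ) * M^2) := Real.sqrt_le_sqrt this
        _ = Real.sqrt s * M := by
            rw [Real.sqrt_mul (le_of_lt hspos), Real.sqrt_sq hMnn]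
    have h1 : (s:ℝ) * M ≤ l1norm (restr A v) := by
      rw [l1_restr]
      calc (s:ℝ) * M = A.card * M := by rw [hA]
        _ = ∑ _i ∈ A, M := by rw [Finset.sum_const, nsmul_eq_mul]
        _ ≤ ∑ i ∈ A, |v i| := Finset.sum_le_sum fun i hi => hsort i hi i₀ hi₀
    calc l2norm (restr B v) ≤ Real.sqrt s * M := h2
      _ = (Real.sqrt s)⁻¹ * ((s:ℝ) * M) := by
          rw [← mul_assoc]
          congr 1
          field_simp
          exact Real.sq_sqrt (le_of_lt hspos)
      _ ≤ (Real.sqrt s)⁻¹ * l1norm (restr A v) := by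
          exact mul_le_mul_of_nonneg_left h1 (le_of_lt (inv_pos.mpr hsq))

/-- shelling inequality: if `S` is partitioned into disjoint blocks
`T₁, T₂, …` (indexed here by `j ≥ 1`) of size at most `s`, each full (of size exactly
`s`) whenever the next block is nonempty, and sorted so that every entry of `|v|` on
`T_{j+1}` is at most every entry of `|v|` on `T_j`, then
`∑_{j≥2} ‖v_{T_j}‖₂ ≤ s^{−1/2}·‖v_S‖₁`. -/
theorem shelling_inequality
    {p : ℕ} (v : Fin p → ℝ) (S : Finset (Fin p)) (s : ℕ) (hs : 1 ≤ s)
    (T : ℕ → Finset (Fin p))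
    (hsub : ∀ j, 1 ≤ j → T j ⊆ S)
    (hcover : ∀ i ∈ S, ∃ j, 1 ≤ j ∧ i ∈ T j)
    (hdisj : ∀ j k, 1 ≤ j → 1 ≤ k → j ≠ k → Disjoint (T j) (T k))
    (hcard : ∀ j, 1 ≤ j → (T j).card ≤ s)
    (hfull : ∀ j, 1 ≤ j → (T (j + 1)).Nonempty → (T j).card = s)
    (hsorted : ∀ j, 1 ≤ j → ∀ i ∈ T j, ∀ i' ∈ T (j + 1), |v i'| ≤ |v i|) :
    ∑' j : ℕ, l2norm (restr (T (j + 2)) v)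
      ≤ (Real.sqrt (s : ℝ))⁻¹ * l1norm (restr S v) := by
  have hspos : (0:ℝ) < s := by exact_mod_cast hs
  have hsqnn : (0:ℝ) ≤ (Real.sqrt (s:ℝ))⁻¹ := by positivity
  set f : ℕ → ℝ := fun j => l2norm (restr (T (j + 2)) v) with hf
  have hzero : ∀ j, T (j + 2) = ∅ → f j = 0 := by
    intro j h; simp [hf, l2_restr, h]
  -- nonempty blocks form an initial segment of full blocks
  have hchain : ∀ j, (T (j + 2)).Nonempty → ∀ k, 1 ≤ k → k ≤ j + 1 → (T k).card = s := by
    intro j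
    induction j with
    | zero =>
        intro h k hk1 hk2
        have : k = 1 := by omega
        subst this
        exact hfull 1 le_rfl h
    | succ n ih =>
        intro h k hk1 hk2
        have hcardn : (T (n + 2)).card = s := hfull (n + 2) (by omega) h
        have hne : (T (n + 2)).Nonempty := by
          rw [← Finset.card_pos, hcardn]; omega
        rcases Nat.lt_or_ge k (n + 2) with hlt | hge
        · exact ih hne k hk1 (by omega)
        · have : k = n + 2 := by omega
          subst this; exact hcardn
  have hsupp : ∀ j ∉ Finset.range S.card, f j = 0 := by
    intro j hj
    by_contra hne
    have hTne : (T (j + 2)).Nonempty := by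
      rcases Finset.eq_empty_or_nonempty (T (j + 2)) with h | h
      · exact absurd (hzero j h) hne
      · exact h
    have hcards := hchain j hTne
    have hU : (Finset.Icc 1 (j + 1)).biUnion T ⊆ S := by
      intro i hi
      obtain ⟨k, hk, hik⟩ := Finset.mem_biUnion.mp hi
      exact hsub k (Finset.mem_Icc.mp hk).1 hik
    have hcardU : ((Finset.Icc 1 (j + 1)).biUnion T).card = (j + 1) * s := by
      rw [Finset.card_biUnion]
      · rw [Finset.sum_congr rfl fun k hk =>
          hcards k (Finset.mem_Icc.mp hk).1 (Finset.mem_Icc.mp hk).2]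
        simp [Finset.sum_const, Nat.card_Icc]
      · intro x hx y hy hxy
        exact hdisj x y (Finset.mem_Icc.mp hx).1 (Finset.mem_Icc.mp hy).1 hxy
    have hle : (j + 1) * s ≤ S.card := hcardU ▸ Finset.card_le_card hU
    have : j + 1 ≤ (j + 1) * s := Nat.le_mul_of_pos_right _ (by omega)
    simp only [Finset.mem_range, not_lt] at hj
    omega
  rw [tsum_eq_sum hsupp]
  have hstep : ∀ j ∈ Finset.range S.card,
      f j ≤ (Real.sqrt (s:ℝ))⁻¹ * l1norm (restr (T (j + 1)) v) := by
    intro j _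
    rcases Finset.eq_empty_or_nonempty (T (j + 2)) with h | h
    · rw [hzero j h]
      exact mul_nonneg hsqnn (l1_nonneg _)
    · exact step_lemma v s hs (T (j + 1)) (T (j + 2)) (hfull (j + 1) (by omega) h)
        (hcard (j + 2) (by omega)) (hsorted (j + 1) (by omega))
  calc ∑ j ∈ Finset.range S.card, f j
      ≤ ∑ j ∈ Finset.range S.card, (Real.sqrt (s:ℝ))⁻¹ * l1norm (restr (T (j + 1)) v) :=
        Finset.sum_le_sum hstep
    _ = (Real.sqrt (s:ℝ))⁻¹ * ∑ j ∈ Finset.range S.card, l1norm (restr (T (j + 1)) v) := by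
        rw [Finset.mul_sum]
    _ ≤ (Real.sqrt (s:ℝ))⁻¹ * l1norm (restr S v) := by
        apply mul_le_mul_of_nonneg_left _ hsqnn
        rw [l1_restr]
        calc ∑ j ∈ Finset.range S.card, l1norm (restr (T (j + 1)) v)
            = ∑ j ∈ Finset.range S.card, ∑ i ∈ T (j + 1), |v i| := by
              exact Finset.sum_congr rfl fun j _ => l1_restr _ _
          _ = ∑ i ∈ (Finset.range S.card).biUnion (fun j => T (j + 1)), |v i| := by
              rw [Finset.sum_biUnion]
              intro x hx y hy hxy
              exact hdisj (x + 1) (y + 1) (by omega) (by omega) (by omega)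
          _ ≤ ∑ i ∈ S, |v i| := by
              apply Finset.sum_le_sum_of_subset_of_nonneg
              · intro i hi
                obtain ⟨k, _, hik⟩ := Finset.mem_biUnion.mp hi
                exact hsub (k + 1) (by omega) hik
              · intro i _ _; exact abs_nonneg _
end
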